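/- Properties of WW at likelihood values: Fix a game (X, λ_w, p, G, v_q, v_u, ω) with likelihood values 0 < l_1 < … < l_n and l_0 := 0, and define WW(l_m) := ω Σ_{x_𝒴 : p(x_𝒴|q)/p(x_𝒴|u) > l_m} (p(x_𝒴|q) − p(x_𝒴|u)) for m ∈ {0,1,…,n}. Then WW(l_m) ∈ [0, ω) for every m, and WW(l_m) = 0 if and only if m ∈ {0, n}. -/

import Mathlib

/-!
Formalization of the Coate–Loury statistical discrimination model with
machine-learning (contractible) beliefs, following Zhu,
"The Impact of Equal Opportunity on Statistical Discrimination".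
-/

open scoped BigOperators
open MeasureTheory

noncomputable section

attribute [local instance] Classical.propDecidable

/-- Group identities `I = {w, b}`. -/
inductive GrpI
  | w
  | b
deriving DecidableEq

instance : Fintype GrpI where
  elems := {GrpI.w, GrpI.b}
  complete := by intro x; cases x <;> simp

/-- Classes `Y = {q, u}` (qualified / unqualified). -/
inductive Cls
  | q
  | u
deriving DecidableEq

instance : Fintype Cls where
  elems := {Cls.q, Cls.u}
  complete := by intro x; cases x <;> simp

/-- A game `(X, λ_w, p, G, v_q, v_u, ω)` of the Coate–Loury model.  The set of
other features is the finite product `X = X_1 × ⋯ × X_N`, encoded as the pi type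
`(j : Fin N) → Xs j`.  The statistical model (Assumption 1) is encoded through a
nonempty subset `Ysub ⊆ {1, …, N}` together with the factorization
`p(x | i, y) = pY(x_𝒴 | y) · pC(x_{-𝒴} | i, x_𝒴)`.  The cost distribution is
given by an everywhere positive density `g` with `∫ g = 1` and `∫ |c| g(c) dc < ∞`. -/
structure Game (N : ℕ) (Xs : Fin N → Type) [∀ j, Fintype (Xs j)]
    [∀ j, Nonempty (Xs j)] where
  lamw : ℝ
  lamw_pos : 0 < lamw
  lamw_lt_one : lamw < 1
  Ysub : Finset (Fin N)
  Ysub_nonempty : Ysub.Nonempty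
  pY : ((j : Ysub) → Xs j.1) → Cls → ℝ
  pC : GrpI → ((j : Fin N) → Xs j) → ℝ
  pY_pos : ∀ xY y, 0 < pY xY y
  pC_pos : ∀ i x, 0 < pC i x
  pY_sum : ∀ y, ∑ xY, pY xY y = 1
  pC_sum : ∀ (i : GrpI) (xY : (j : Ysub) → Xs j.1),
    ∑ x ∈ Finset.univ.filter
        (fun x : (j : Fin N) → Xs j => (fun j : Ysub => x j.1) = xY),
      pC i x = 1
  g : ℝ → ℝ
  g_pos : ∀ c, 0 < g c
  g_int : Integrable g
  g_norm : (∫ c, g c) = 1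
  g_abs_int : Integrable fun c => |c| * g c
  vq : ℝ
  vu : ℝ
  om : ℝ
  vq_pos : 0 < vq
  vu_pos : 0 < vu
  om_pos : 0 < om

section Policies

variable {N : ℕ} {Xs : Fin N → Type}

/-- A decision policy `d : I × X → [0,1]`. -/
def IsPolicy (d : GrpI → ((j : Fin N) → Xs j) → ℝ) : Prop :=
  ∀ i x, d i x ∈ Set.Icc (0 : ℝ) 1

/-- A decision policy when data is color-blind, `d_cb : X → [0,1]`. -/
def IsCbPolicy (dcb : ((j : Fin N) → Xs j) → ℝ) : Prop :=
  ∀ x, dcb x ∈ Set.Icc (0 : ℝ) 1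

/-- `S ⊆ {1, …, N}` has the dependence property for the belief `f`:
`f` depends on `(i, x)` only up to `(i, x_S)`. -/
def DepProp {I : Type} (f : I → ((j : Fin N) → Xs j) → ℝ)
    (S : Finset (Fin N)) : Prop :=
  ∀ (i : I) (x x' : (j : Fin N) → Xs j), (∀ j ∈ S, x j = x' j) → f i x = f i x'

/-- The minimal subset `Ŷ(f)` with the dependence property. -/
def minDep {I : Type} (f : I → ((j : Fin N) → Xs j) → ℝ) : Finset (Fin N) :=
  Finset.univ.filter fun j => ∀ S : Finset (Fin N), DepProp f S → j ∈ S

variable [∀ j, Fintype (Xs j)]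

/-- Full-support probability distributions on `I × X` (the set `Δ°(I × X)`). -/
def FullSupp (μ : GrpI → ((j : Fin N) → Xs j) → ℝ) : Prop :=
  (∀ i x, 0 < μ i x) ∧ ∑ i, ∑ x, μ i x = 1

/-- Beliefs valued in `(0, 1)`. -/
def OpenBelief (f : GrpI → ((j : Fin N) → Xs j) → ℝ) : Prop :=
  ∀ i x, f i x ∈ Set.Ioo (0 : ℝ) 1

/-- Acceptance rate of group `i`. -/
def AR (i : GrpI) (d μ : GrpI → ((j : Fin N) → Xs j) → ℝ) : ℝ :=
  (∑ x, d i x * μ i x) / ∑ x, μ i x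

/-- True positive rate of group `i`. -/
def TP (i : GrpI) (d μ f : GrpI → ((j : Fin N) → Xs j) → ℝ) : ℝ :=
  (∑ x, d i x * μ i x * f i x) / ∑ x, μ i x * f i x

/-- The equal opportunity control `k(X, μ, f)`. -/
def EOset (μ f : GrpI → ((j : Fin N) → Xs j) → ℝ) :
    Set (GrpI → ((j : Fin N) → Xs j) → ℝ) :=
  {d | IsPolicy d ∧ TP GrpI.w d μ f = TP GrpI.b d μ f}

/-- The color-blind control: all color-blind decision policies. -/
def CBset : Set (GrpI → ((j : Fin N) → Xs j) → ℝ) :=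
  {d | IsPolicy d ∧ ∀ x, d GrpI.w x = d GrpI.b x}

/-- The no proxies control: policies depending on `(i,x)` only through `x_{Ŷ(f)}`. -/
def NoProxies (_μ f : GrpI → ((j : Fin N) → Xs j) → ℝ) :
    Set (GrpI → ((j : Fin N) → Xs j) → ℝ) :=
  {d | IsPolicy d ∧
    ∀ i i' x x', (∀ j ∈ minDep f, x j = x' j) → d i x = d i' x'}

/-- `ℓ²` distance between decision policies. -/
def polDist (d d' : GrpI → ((j : Fin N) → Xs j) → ℝ) : ℝ :=
  Real.sqrt (∑ i, ∑ x, (d i x - d' i x) ^ 2)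

/-- `ℓ²` distance between pairs `(μ, f)`. -/
def pairDist (μ f μ' f' : GrpI → ((j : Fin N) → Xs j) → ℝ) : ℝ :=
  Real.sqrt ((∑ i, ∑ x, (μ i x - μ' i x) ^ 2) + ∑ i, ∑ x, (f i x - f' i x) ^ 2)

/-- `ℓ²` distance between strategy profiles `(c̄, d)`. -/
def profDist (c : GrpI → ℝ) (d : GrpI → ((j : Fin N) → Xs j) → ℝ)
    (c' : GrpI → ℝ) (d' : GrpI → ((j : Fin N) → Xs j) → ℝ) : ℝ :=
  Real.sqrt ((∑ i, (c i - c' i) ^ 2) + ∑ i, ∑ x, (d i x - d' i x) ^ 2)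

end Policies

/-- Upper hemicontinuity of a correspondence on a set. -/
def UpperHemicontinuousOn' {α β : Type*} [TopologicalSpace α] [TopologicalSpace β]
    (F : α → Set β) (S : Set α) : Prop :=
  ∀ a ∈ S, ∀ V : Set β, IsOpen V → F a ⊆ V → ∀ᶠ a' in nhdsWithin a S, F a' ⊆ V

/-- Lower hemicontinuity of a correspondence on a set. -/
def LowerHemicontinuousOn' {α β : Type*} [TopologicalSpace α] [TopologicalSpace β]
    (F : α → Set β) (S : Set α) : Prop :=
  ∀ a ∈ S, ∀ V : Set β, IsOpen V → (F a ∩ V).Nonempty →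
    ∀ᶠ a' in nhdsWithin a S, (F a' ∩ V).Nonempty

namespace Game

variable {N : ℕ} {Xs : Fin N → Type} [∀ j, Fintype (Xs j)] [∀ j, Nonempty (Xs j)]
variable (Γ : Game N Xs)

/-- Projection `x ↦ x_𝒴`. -/
def proj (x : (j : Fin N) → Xs j) : (j : Γ.Ysub) → Xs j.1 := fun j => x j.1

/-- `p(x | i, y) = p(x_𝒴 | y) · p(x_{-𝒴} | i, x_𝒴)`. -/
def p (i : GrpI) (x : (j : Fin N) → Xs j) (y : Cls) : ℝ :=
  Γ.pY (Γ.proj x) y * Γ.pC i x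

/-- Group probabilities `λ_w`, `λ_b = 1 - λ_w`. -/
def lam : GrpI → ℝ := fun i =>
  match i with
  | GrpI.w => Γ.lamw
  | GrpI.b => 1 - Γ.lamw

/-- The CDF `G` of the cost distribution. -/
def G (c : ℝ) : ℝ := ∫ t in Set.Iic c, Γ.g t

/-- The likelihood function `l(x) = p(x_𝒴 | q) / p(x_𝒴 | u)`. -/
def lhd (x : (j : Fin N) → Xs j) : ℝ :=
  Γ.pY (Γ.proj x) Cls.q / Γ.pY (Γ.proj x) Cls.u

/-- The likelihood function on `X_𝒴`. -/
def lhdY (xY : (j : Γ.Ysub) → Xs j.1) : ℝ := Γ.pY xY Cls.q / Γ.pY xY Cls.u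

/-- The set of likelihood values `{l_1 < … < l_n}`. -/
def LVset : Set ℝ := Set.range Γ.lhd

/-- The assumption that `1` is not a likelihood value
(equivalently, `WW` is single-peaked). -/
def OneNotLV : Prop := (1 : ℝ) ∉ Γ.LVset

/-- The largest likelihood value `l_n`. -/
def lmax : ℝ := sSup Γ.LVset

/-- `⌈ℓ⌉`: the smallest likelihood value `≥ ℓ`. -/
def lceil (ℓ : ℝ) : ℝ := sInf {v | v ∈ Γ.LVset ∧ ℓ ≤ v}

/-- `⌈ℓ⌉⁻`: the next smallest likelihood value below `⌈ℓ⌉` (or `l_0 = 0`). -/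
def lceilm (ℓ : ℝ) : ℝ := sSup (insert 0 {v | v ∈ Γ.LVset ∧ v < Γ.lceil ℓ})

/-- The smallest likelihood value `> ℓ`. -/
def lnext (ℓ : ℝ) : ℝ := sInf {v | v ∈ Γ.LVset ∧ ℓ < v}

/-- The true distribution of features `μ_RE` given cost thresholds `c̄`. -/
def muRE (c : GrpI → ℝ) (i : GrpI) (x : (j : Fin N) → Xs j) : ℝ :=
  Γ.lam i * (Γ.G (c i) * Γ.p i x Cls.q + (1 - Γ.G (c i)) * Γ.p i x Cls.u)

/-- The true conditional probability (calibrated belief) `f_RE` given `c̄`. -/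
def fRE (c : GrpI → ℝ) (i : GrpI) (x : (j : Fin N) → Xs j) : ℝ :=
  Γ.G (c i) * Γ.p i x Cls.q /
    (Γ.G (c i) * Γ.p i x Cls.q + (1 - Γ.G (c i)) * Γ.p i x Cls.u)

/-- Utility `U_i(c̄(i), d(i))` of the representative `i`-applicant. -/
def Uapp (i : GrpI) (ci : ℝ) (di : ((j : Fin N) → Xs j) → ℝ) : ℝ :=
  Γ.om * ∑ x, (Γ.G ci * Γ.p i x Cls.q + (1 - Γ.G ci) * Γ.p i x Cls.u) * di x -
    ∫ t in Set.Iic ci, t * Γ.g t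

/-- Firm utility `U_F(d, μ, f)`. -/
def UF (d μ f : GrpI → ((j : Fin N) → Xs j) → ℝ) : ℝ :=
  ∑ i, ∑ x, d i x * μ i x * (f i x * Γ.vq - (1 - f i x) * Γ.vu)

/-- The color-blind true distribution of features `μ_cb,RE`. -/
def mucbRE (c : GrpI → ℝ) (x : (j : Fin N) → Xs j) : ℝ :=
  Γ.muRE c GrpI.w x + Γ.muRE c GrpI.b x

/-- The color-blind true conditional probability `f_cb,RE`. -/
def fcbRE (c : GrpI → ℝ) (x : (j : Fin N) → Xs j) : ℝ :=
  (Γ.muRE c GrpI.w x * Γ.fRE c GrpI.w x + Γ.muRE c GrpI.b x * Γ.fRE c GrpI.b x) /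
    Γ.mucbRE c x

/-- Firm utility when data is color-blind. -/
def UFcb (dcb μcb fcb : ((j : Fin N) → Xs j) → ℝ) : ℝ :=
  ∑ x, dcb x * μcb x * (fcb x * Γ.vq - (1 - fcb x) * Γ.vu)

/-- `d(i | l_m)`: conditional acceptance probability at likelihood value `lv`. -/
def dcond (i : GrpI) (di : ((j : Fin N) → Xs j) → ℝ) (lv : ℝ) : ℝ :=
  (∑ x ∈ Finset.univ.filter (fun x => Γ.lhd x = lv), Γ.p i x Cls.q * di x) /
    ∑ x ∈ Finset.univ.filter (fun x => Γ.lhd x = lv), Γ.p i x Cls.q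

/-- The within-group policy `d(i)` is associated with the likelihood mixture `ℓ`. -/
def AssociatedWith (i : GrpI) (di : ((j : Fin N) → Xs j) → ℝ) (ℓ : ℝ) : Prop :=
  0 ≤ ℓ ∧ ℓ ≤ Γ.lmax ∧
    ∀ lv ∈ Γ.LVset,
      (Γ.lceil ℓ < lv → Γ.dcond i di lv = 1) ∧
      (lv = Γ.lceil ℓ →
        Γ.dcond i di lv = (Γ.lceil ℓ - ℓ) / (Γ.lceil ℓ - Γ.lceilm ℓ)) ∧
      (lv < Γ.lceil ℓ → Γ.dcond i di lv = 0)

/-- A decision policy is fair if both within-group policies are associated with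
the same likelihood mixture. -/
def Fair (d : GrpI → ((j : Fin N) → Xs j) → ℝ) : Prop :=
  ∃ ℓ, Γ.AssociatedWith GrpI.w (d GrpI.w) ℓ ∧ Γ.AssociatedWith GrpI.b (d GrpI.b) ℓ

/-- `WW(l_m) = ω ∑_{x_𝒴 : l(x_𝒴) > l_m} (p(x_𝒴|q) - p(x_𝒴|u))`. -/
def WWval (t : ℝ) : ℝ :=
  Γ.om * ∑ xY ∈ Finset.univ.filter (fun xY => t < Γ.lhdY xY),
    (Γ.pY xY Cls.q - Γ.pY xY Cls.u)

/-- The piecewise-linear function `WW` interpolating the points `(l_m, WW(l_m))`. -/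
def WW (ℓ : ℝ) : ℝ :=
  if Γ.lceil ℓ = Γ.lceilm ℓ then Γ.WWval (Γ.lceil ℓ)
  else
    (Γ.WWval (Γ.lceilm ℓ) * (Γ.lceil ℓ - ℓ) +
        Γ.WWval (Γ.lceil ℓ) * (ℓ - Γ.lceilm ℓ)) /
      (Γ.lceil ℓ - Γ.lceilm ℓ)

/-- `EĒ(l_m)`: the unique cost with `G(EĒ(l_m)) = 1 / ((v_q/v_u) l_m + 1)`. -/
def EEbar (lv : ℝ) : ℝ := sInf {cc | 1 / (Γ.vq / Γ.vu * lv + 1) ≤ Γ.G cc}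

/-- The correspondence `EE : [0, l_n] ⇒ ℝ`. -/
def EE (ℓ : ℝ) : Set ℝ :=
  if ℓ = 0 then Set.Ici (Γ.EEbar (Γ.lceil 0))
  else if ℓ = Γ.lmax then Set.Iic (Γ.EEbar Γ.lmax)
  else if ℓ ∈ Γ.LVset then Set.Icc (Γ.EEbar (Γ.lnext ℓ)) (Γ.EEbar ℓ)
  else {Γ.EEbar (Γ.lceil ℓ)}

/-- Each representative applicant's cost threshold is a best response to `d`. -/
def BestResponds (c : GrpI → ℝ) (d : GrpI → ((j : Fin N) → Xs j) → ℝ) : Prop :=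
  ∀ (i : GrpI) (c' : ℝ), Γ.Uapp i c' (d i) ≤ Γ.Uapp i (c i) (d i)

/-- An (un-controlled) equilibrium. -/
def IsEquilibrium (c : GrpI → ℝ) (d : GrpI → ((j : Fin N) → Xs j) → ℝ) : Prop :=
  IsPolicy d ∧ Γ.BestResponds c d ∧
    ∀ d', IsPolicy d' →
      Γ.UF d' (Γ.muRE c) (Γ.fRE c) ≤ Γ.UF d (Γ.muRE c) (Γ.fRE c)

/-- A `k`-controlled equilibrium, for the control `(μ, f) ↦ K μ f`. -/
def IsControlledEq
    (K : (GrpI → ((j : Fin N) → Xs j) → ℝ) → (GrpI → ((j : Fin N) → Xs j) → ℝ) →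
      Set (GrpI → ((j : Fin N) → Xs j) → ℝ))
    (c : GrpI → ℝ) (d : GrpI → ((j : Fin N) → Xs j) → ℝ) : Prop :=
  d ∈ K (Γ.muRE c) (Γ.fRE c) ∧ Γ.BestResponds c d ∧
    ∀ d' ∈ K (Γ.muRE c) (Γ.fRE c),
      Γ.UF d' (Γ.muRE c) (Γ.fRE c) ≤ Γ.UF d (Γ.muRE c) (Γ.fRE c)

/-- `𝒮_k(μ, f)`: firm-optimal policies under the control `K` at `(μ, f)`. -/
def Smax
    (K : (GrpI → ((j : Fin N) → Xs j) → ℝ) → (GrpI → ((j : Fin N) → Xs j) → ℝ) →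
      Set (GrpI → ((j : Fin N) → Xs j) → ℝ))
    (μ f : GrpI → ((j : Fin N) → Xs j) → ℝ) :
    Set (GrpI → ((j : Fin N) → Xs j) → ℝ) :=
  {d | d ∈ K μ f ∧ ∀ d' ∈ K μ f, Γ.UF d' μ f ≤ Γ.UF d μ f}

/-- A `k`-controlled `ε`-equilibrium. -/
def IsCtrlEpsEq
    (K : (GrpI → ((j : Fin N) → Xs j) → ℝ) → (GrpI → ((j : Fin N) → Xs j) → ℝ) →
      Set (GrpI → ((j : Fin N) → Xs j) → ℝ))
    (ε : ℝ) (c : GrpI → ℝ) (d : GrpI → ((j : Fin N) → Xs j) → ℝ) : Prop :=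
  ∃ μ f, FullSupp μ ∧ OpenBelief f ∧
    pairDist μ f (Γ.muRE c) (Γ.fRE c) ≤ ε ∧
    Γ.BestResponds c d ∧ d ∈ K μ f ∧ ∀ d' ∈ K μ f, Γ.UF d' μ f ≤ Γ.UF d μ f

/-- Best responses of applicants to a color-blind policy. -/
def BestRespondsCb (c : GrpI → ℝ) (dcb : ((j : Fin N) → Xs j) → ℝ) : Prop :=
  ∀ (i : GrpI) (c' : ℝ), Γ.Uapp i c' dcb ≤ Γ.Uapp i (c i) dcb

/-- An equilibrium when data is color-blind (unrestricted control). -/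
def IsCbEquilibrium (c : GrpI → ℝ) (dcb : ((j : Fin N) → Xs j) → ℝ) : Prop :=
  IsCbPolicy dcb ∧ Γ.BestRespondsCb c dcb ∧
    ∀ dcb', IsCbPolicy dcb' →
      Γ.UFcb dcb' (Γ.mucbRE c) (Γ.fcbRE c) ≤ Γ.UFcb dcb (Γ.mucbRE c) (Γ.fcbRE c)

/-- A `k_cb`-controlled equilibrium when data is color-blind. -/
def IsCbControlledEq (K : Set (((j : Fin N) → Xs j) → ℝ)) (c : GrpI → ℝ)
    (dcb : ((j : Fin N) → Xs j) → ℝ) : Prop :=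
  dcb ∈ K ∧ Γ.BestRespondsCb c dcb ∧
    ∀ dcb' ∈ K,
      Γ.UFcb dcb' (Γ.mucbRE c) (Γ.fcbRE c) ≤ Γ.UFcb dcb (Γ.mucbRE c) (Γ.fcbRE c)

end Game

/-- A control when data is color-blind: for each `X` and each
`(μ_cb, f_cb) ∈ Δ°(X) × (0,1)^X` it specifies a nonempty compact set of
color-blind decision policies. -/
structure CbControl : Type 1 where
  sets : ∀ (N : ℕ) (Xs : Fin N → Type) [∀ j, Fintype (Xs j)] [∀ j, Nonempty (Xs j)],
    (((j : Fin N) → Xs j) → ℝ) → (((j : Fin N) → Xs j) → ℝ) →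
      Set (((j : Fin N) → Xs j) → ℝ)
  nonempty : ∀ (N : ℕ) (Xs : Fin N → Type) [∀ j, Fintype (Xs j)]
    [∀ j, Nonempty (Xs j)] (μ f : ((j : Fin N) → Xs j) → ℝ),
    (∀ x, 0 < μ x) → (∑ x, μ x = 1) → (∀ x, f x ∈ Set.Ioo (0 : ℝ) 1) →
    (sets N Xs μ f).Nonempty
  compact : ∀ (N : ℕ) (Xs : Fin N → Type) [∀ j, Fintype (Xs j)]
    [∀ j, Nonempty (Xs j)] (μ f : ((j : Fin N) → Xs j) → ℝ),
    (∀ x, 0 < μ x) → (∑ x, μ x = 1) → (∀ x, f x ∈ Set.Ioo (0 : ℝ) 1) →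
    IsCompact (sets N Xs μ f)
  mem_policy : ∀ (N : ℕ) (Xs : Fin N → Type) [∀ j, Fintype (Xs j)]
    [∀ j, Nonempty (Xs j)] (μ f : ((j : Fin N) → Xs j) → ℝ),
    (∀ x, 0 < μ x) → (∑ x, μ x = 1) → (∀ x, f x ∈ Set.Ioo (0 : ℝ) 1) →
    sets N Xs μ f ⊆ {dcb | IsCbPolicy dcb}

/-! The excess `Σ_{q/u > t} (q − u)` is nonnegative because the ratio test splits the points
cleanly around `1`: for `t ≥ 1` every summand is positive, while for `t < 1` the identity
`Σ q = Σ u` turns the sum into minus the sum over the complement, whose summands are `≤ 0`.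
It vanishes at `t = 0` (nothing is excluded) and at `t = l_n` (nothing is included); any other
likelihood value `t` contributes a strictly positive term: a point above `t` if `t ≥ 1`, the
point at ratio `t` itself if `t < 1`. Finally it is less than `Σ q = 1`, termwise. -/

section ExcessAbove

open Finset

theorem sub_pos_of_one_le_of_lt_div {q u t : ℝ} (hu : 0 < u) (ht : 1 ≤ t) (h : t < q / u) :
    0 < q - u :=
  sub_pos.2 ((one_lt_div hu).1 (ht.trans_lt h))

theorem sub_nonpos_of_le_one_of_div_le {q u t : ℝ} (hu : 0 < u) (ht : t ≤ 1) (h : q / u ≤ t) :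
    q - u ≤ 0 :=
  sub_nonpos.2 ((div_le_one hu).1 (h.trans ht))

variable {α : Type*} [Fintype α] {q u : α → ℝ}

def excessAbove (q u : α → ℝ) (t : ℝ) : ℝ :=
  ∑ a ∈ univ.filter (fun a => t < q a / u a), (q a - u a)

theorem excessAbove_eq_neg_sum_filter_not (hsum : ∑ a, q a = ∑ a, u a) (t : ℝ) :
    excessAbove q u t = -∑ a ∈ univ.filter (fun a => ¬ t < q a / u a), (q a - u a) := by
  have htotal : ∑ a, (q a - u a) = 0 := by rw [sum_sub_distrib, hsum, sub_self]
  have hsplit := sum_filter_add_sum_filter_not univ (fun a => t < q a / u a)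
    (fun a => q a - u a)
  rw [htotal] at hsplit
  exact eq_neg_of_add_eq_zero_left hsplit

theorem excessAbove_nonneg (hu : ∀ a, 0 < u a) (hsum : ∑ a, q a = ∑ a, u a) (t : ℝ) :
    0 ≤ excessAbove q u t := by
  rcases le_or_gt 1 t with ht | ht
  · exact sum_nonneg fun a ha =>
      (sub_pos_of_one_le_of_lt_div (hu a) ht (mem_filter.1 ha).2).le
  · rw [excessAbove_eq_neg_sum_filter_not hsum, neg_nonneg]
    exact sum_nonpos fun a ha =>
      sub_nonpos_of_le_one_of_div_le (hu a) ht.le (not_lt.1 (mem_filter.1 ha).2)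

theorem excessAbove_pos (hu : ∀ a, 0 < u a) (hsum : ∑ a, q a = ∑ a, u a) {a b : α}
    {t : ℝ} (hat : q a / u a = t) (hbt : t < q b / u b) : 0 < excessAbove q u t := by
  rcases le_or_gt 1 t with ht | ht
  · refine sum_pos' (fun c hc => ?_) ⟨b, mem_filter.2 ⟨mem_univ b, hbt⟩, ?_⟩
    · exact (sub_pos_of_one_le_of_lt_div (hu c) ht (mem_filter.1 hc).2).le
    · exact sub_pos_of_one_le_of_lt_div (hu b) ht hbt
  · rw [excessAbove_eq_neg_sum_filter_not hsum, neg_pos]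
    refine sum_neg' (fun c hc => ?_) ⟨a, mem_filter.2 ⟨mem_univ a, hat.le.not_gt⟩, ?_⟩
    · exact sub_nonpos_of_le_one_of_div_le (hu c) ht.le (not_lt.1 (mem_filter.1 hc).2)
    · exact sub_neg.2 ((div_lt_one (hu a)).1 (hat.trans_lt ht))

theorem excessAbove_lt_sum [Nonempty α] (hq : ∀ a, 0 < q a) (hu : ∀ a, 0 < u a) (t : ℝ) :
    excessAbove q u t < ∑ a, q a := by
  rw [excessAbove, sum_filter]
  refine sum_lt_sum_of_nonempty univ_nonempty fun a _ => ?_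
  split_ifs
  · exact sub_lt_self _ (hu a)
  · exact hq a

theorem excessAbove_eq_zero_of_forall_lt (hsum : ∑ a, q a = ∑ a, u a) {t : ℝ}
    (h : ∀ a, t < q a / u a) : excessAbove q u t = 0 := by
  rw [excessAbove, filter_true_of_mem fun a _ => h a, sum_sub_distrib, hsum, sub_self]

theorem excessAbove_eq_zero_of_forall_le {t : ℝ} (h : ∀ a, q a / u a ≤ t) :
    excessAbove q u t = 0 := by
  rw [excessAbove, filter_false_of_mem fun a _ => (h a).not_gt, sum_empty]

end ExcessAbove

namespace Game

variable {N : ℕ} {Xs : Fin N → Type} [∀ j, Fintype (Xs j)] [∀ j, Nonempty (Xs j)]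
variable (Γ : Game N Xs)

theorem WWval_eq_om_mul_excessAbove (t : ℝ) :
    Γ.WWval t = Γ.om * excessAbove (Γ.pY · Cls.q) (Γ.pY · Cls.u) t := rfl

theorem proj_surjective : Function.Surjective Γ.proj := fun xY =>
  ⟨fun j => if h : j ∈ Γ.Ysub then xY ⟨j, h⟩ else Classical.arbitrary _,
    funext fun j => dif_pos j.2⟩

theorem lhdY_mem_LVset (xY : (j : Γ.Ysub) → Xs j.1) : Γ.lhdY xY ∈ Γ.LVset := by
  obtain ⟨x, rfl⟩ := Γ.proj_surjective xY
  exact ⟨x, rfl⟩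

theorem lhdY_le_lmax (xY : (j : Γ.Ysub) → Xs j.1) : Γ.lhdY xY ≤ Γ.lmax :=
  le_csSup (Set.finite_range _).bddAbove (Γ.lhdY_mem_LVset xY)

theorem lmax_mem_LVset : Γ.lmax ∈ Γ.LVset :=
  (Set.range_nonempty _).csSup_mem (Set.finite_range _)

end Game

theorem WW_values_properties_general
    {N : ℕ} {Xs : Fin N → Type} [∀ j, Fintype (Xs j)] [∀ j, Nonempty (Xs j)]
    (Γ : Game N Xs) :
    (∀ t ∈ insert (0 : ℝ) Γ.LVset, Γ.WWval t ∈ Set.Ico 0 Γ.om) ∧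
    (∀ t ∈ insert (0 : ℝ) Γ.LVset, (Γ.WWval t = 0 ↔ t = 0 ∨ t = Γ.lmax)) := by
  have hq : ∀ xY, 0 < Γ.pY xY Cls.q := fun xY => Γ.pY_pos xY Cls.q
  have hu : ∀ xY, 0 < Γ.pY xY Cls.u := fun xY => Γ.pY_pos xY Cls.u
  have hsum : ∑ xY, Γ.pY xY Cls.q = ∑ xY, Γ.pY xY Cls.u := by rw [Γ.pY_sum, Γ.pY_sum]
  refine ⟨fun t _ => ?_, fun t ht => ?_⟩
  · have hlt := excessAbove_lt_sum hq hu t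
    rw [Γ.pY_sum] at hlt
    rw [Γ.WWval_eq_om_mul_excessAbove]
    exact ⟨mul_nonneg Γ.om_pos.le (excessAbove_nonneg hu hsum t),
      mul_lt_of_lt_one_right Γ.om_pos hlt⟩
  rw [Γ.WWval_eq_om_mul_excessAbove, mul_eq_zero, or_iff_right Γ.om_pos.ne']
  constructor
  · intro h0
    rcases ht with rfl | ⟨x, rfl⟩
    · exact Or.inl rfl
    refine Or.inr (by_contra fun hne => ?_)
    obtain ⟨xmax, hxmax⟩ := Γ.lmax_mem_LVset
    have hlt : Γ.lhd x < Γ.lhd xmax :=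
      hxmax ▸ (Γ.lhdY_le_lmax (Γ.proj x)).lt_of_ne hne
    exact (excessAbove_pos hu hsum rfl hlt).ne' h0
  · rintro (rfl | rfl)
    · exact excessAbove_eq_zero_of_forall_lt hsum fun xY => div_pos (hq xY) (hu xY)
    · exact excessAbove_eq_zero_of_forall_le Γ.lhdY_le_lmax

/-- **Properties of `WW` at likelihood values.** In a game whose likelihood
function is not constant, `WW(l_m) ∈ [0, ω)` for every
`m ∈ {0, 1, …, n}` (with `l_0 = 0`), and `WW(l_m) = 0` if and only if
`m ∈ {0, n}`, i.e. iff `l_m = 0` or `l_m = l_n` is the largest value. -/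
theorem WW_values_properties
    {N : ℕ} {Xs : Fin N → Type} [∀ j, Fintype (Xs j)] [∀ j, Nonempty (Xs j)]
    (Γ : Game N Xs)
    (hnc : ∃ x x' : (j : Fin N) → Xs j, Γ.lhd x ≠ Γ.lhd x') :
    (∀ t ∈ insert (0 : ℝ) Γ.LVset, Γ.WWval t ∈ Set.Ico 0 Γ.om) ∧
    (∀ t ∈ insert (0 : ℝ) Γ.LVset, (Γ.WWval t = 0 ↔ t = 0 ∨ t = Γ.lmax)) :=
  WW_values_properties_general Γ
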